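/- For every total parsing expression grammar G over a finite alphabet Σ there exists a scaffolding automaton A with input alphabet Σ such that A decides exactly the reversal of the language recognised by G, i.e. L(A) = { xʳ : x ∈ L(G) }. -/

import Mathlib

/-! ## Parsing expression grammars -/

/-- Parsing expressions over terminal alphabet `α` and non-terminal alphabet `ν`. -/
inductive PExp (α : Type) (ν : Type) : Type where
  | eps : PExp α ν
  | fail : PExp α ν
  | term (a : α) : PExp α ν
  | nt (A : ν) : PExp α ν
  | notP (e : PExp α ν) : PExp α ν
  | andP (e : PExp α ν) : PExp α ν
  | seq (e₁ e₂ : PExp α ν) : PExp α ν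
  | choice (e₁ e₂ : PExp α ν) : PExp α ν

/-- Big-step semantics of the recognition map `Rec` of a PEG with rules `R`:
`PegRec R e x r` holds iff `Rec(e,x)` is defined and equals `r`, where
`r = none` codes `FAIL` and `r = some y` codes the consumed prefix `y` of `x`. -/
inductive PegRec {α ν : Type} (R : ν → PExp α ν) :
    PExp α ν → List α → Option (List α) → Prop where
  | eps (x : List α) : PegRec R .eps x (some [])
  | fail (x : List α) : PegRec R .fail x none
  | termOk (a : α) (z : List α) : PegRec R (.term a) (a :: z) (some [a])
  | termMismatch (a b : α) (z : List α) (h : a ≠ b) : PegRec R (.term a) (b :: z) none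
  | termNil (a : α) : PegRec R (.term a) [] none
  | notFail (e : PExp α ν) (x : List α) :
      PegRec R e x none → PegRec R (.notP e) x (some [])
  | notSucc (e : PExp α ν) (x y : List α) :
      PegRec R e x (some y) → PegRec R (.notP e) x none
  | andSucc (e : PExp α ν) (x y : List α) :
      PegRec R e x (some y) → PegRec R (.andP e) x (some [])
  | andFail (e : PExp α ν) (x : List α) :
      PegRec R e x none → PegRec R (.andP e) x none
  | seqOk (e₁ e₂ : PExp α ν) (y₁ z y₂ : List α) :
      PegRec R e₁ (y₁ ++ z) (some y₁) → PegRec R e₂ z (some y₂) →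
      PegRec R (.seq e₁ e₂) (y₁ ++ z) (some (y₁ ++ y₂))
  | seqFail₁ (e₁ e₂ : PExp α ν) (x : List α) :
      PegRec R e₁ x none → PegRec R (.seq e₁ e₂) x none
  | seqFail₂ (e₁ e₂ : PExp α ν) (y₁ z : List α) :
      PegRec R e₁ (y₁ ++ z) (some y₁) → PegRec R e₂ z none →
      PegRec R (.seq e₁ e₂) (y₁ ++ z) none
  | choice₁ (e₁ e₂ : PExp α ν) (x y : List α) :
      PegRec R e₁ x (some y) → PegRec R (.choice e₁ e₂) x (some y)
  | choice₂ (e₁ e₂ : PExp α ν) (x : List α) (r : Option (List α)) :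
      PegRec R e₁ x none → PegRec R e₂ x r → PegRec R (.choice e₁ e₂) x r
  | ntRule (A : ν) (x : List α) (r : Option (List α)) :
      PegRec R (R A) x r → PegRec R (.nt A) x r

/-- A parsing expression grammar over the (finite) terminal alphabet `α`:
a finite alphabet `ν` of non-terminals, a rule for each non-terminal,
and a starting non-terminal. -/
structure PEG (α : Type) : Type 1 where
  ν : Type
  finNT : Finite ν
  R : ν → PExp α ν
  S : ν

/-- A PEG is total if its recognition map is total (defined on every expression and input). -/
def PEG.Total {α : Type} (G : PEG α) : Prop :=
  ∀ (e : PExp α G.ν) (x : List α), ∃ r, PegRec G.R e x r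

/-- The language recognised by a PEG: strings on which the starting
non-terminal succeeds and consumes the whole input. -/
def PEG.Lang {α : Type} (G : PEG α) : Set (List α) :=
  { x | PegRec G.R (.nt G.S) x (some x) }

/-- A language is in the class `PEG` iff some total parsing expression grammar recognises it. -/
def IsPEGLang {α : Type} (L : Set (List α)) : Prop :=
  ∃ G : PEG α, G.Total ∧ G.Lang = L

/-! ## Scaffolding automata -/

/-- A `(d,Γ)`-scaffold: nodes `0, …, top`, each node `v` carrying
`d` (possibly missing) edges pointing backwards (to nodes `≤ v`)
and an optional label from `Γ`.  (The data of the functions at indices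
beyond `top` is irrelevant.) -/
structure Scaffold (d : ℕ) (Γ : Type) : Type where
  top : ℕ
  edge : ℕ → Fin d → Option ℕ
  label : ℕ → Option Γ
  back : ∀ v i w, edge v i = some w → w ≤ v

/-- The type of `k`-neighbourhoods for `(d,Γ)`-scaffolds:
`N₀ = Γ ∪ {∅}` and `N_{k+1} = (Γ ∪ {∅}) × (N_k ∪ {∅})^d`. -/
def Nbhd (d : ℕ) (Γ : Type) : ℕ → Type
  | 0 => Option Γ
  | k + 1 => Option Γ × (Fin d → Option (Nbhd d Γ k))

/-- The `k`-neighbourhood of node `v` in a scaffold. -/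
def Scaffold.nbhd {d : ℕ} {Γ : Type} (S : Scaffold d Γ) : (k : ℕ) → ℕ → Nbhd d Γ k
  | 0, v => S.label v
  | k + 1, v => (S.label v, fun i => (S.edge v i).map (S.nbhd k))

/-- The specification of an edge of a newly created node: either a path
(a sequence of at most `k` edge indices, to be followed from the old top node),
or `SELF` (the new node itself), or `missing` (no edge, `∅`). -/
inductive PathSpec (d k : ℕ) : Type where
  | path (l : List (Fin d)) (h : l.length ≤ k) : PathSpec d k
  | self : PathSpec d k
  | missing : PathSpec d k

/-- Following a path (sequence of edge indices) from node `v` in a scaffold;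
returns `none` if the path is invalid. -/
def Scaffold.follow {d : ℕ} {Γ : Type} (S : Scaffold d Γ) :
    List (Fin d) → ℕ → Option ℕ
  | [], v => some v
  | i :: l, v => (S.edge v i).bind (S.follow l)

theorem Scaffold.follow_le {d : ℕ} {Γ : Type} (S : Scaffold d Γ) :
    ∀ (l : List (Fin d)) (v w : ℕ), S.follow l v = some w → w ≤ v := by
  intro l
  induction l with
  | nil =>
    intro v w h
    simp only [Scaffold.follow, Option.some_inj] at h
    omega
  | cons i l ih =>
    intro v w h
    simp only [Scaffold.follow, Option.bind_eq_some_iff] at h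
    obtain ⟨u, hu, hw⟩ := h
    exact le_trans (ih u w hw) (S.back v i u hu)

/-- The initial scaffold: a single unlabelled node with all edges missing. -/
def Scaffold.init (d : ℕ) (Γ : Type) : Scaffold d Γ where
  top := 0
  edge := fun _ _ => none
  label := fun _ => none
  back := by intro v i w h; exact absurd h (by simp)

/-- Appending a new top node with label `γ`, whose edges are determined by the
path specifications `ps` (followed from the old top node). -/
def Scaffold.extend {d k : ℕ} {Γ : Type} (S : Scaffold d Γ) (γ : Γ)
    (ps : Fin d → PathSpec d k) : Scaffold d Γ where
  top := S.top + 1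
  edge := fun v j =>
    if v = S.top + 1 then
      match ps j with
      | .missing => none
      | .self => some (S.top + 1)
      | .path l _ => S.follow l S.top
    else if v ≤ S.top then S.edge v j else none
  label := fun v =>
    if v = S.top + 1 then some γ else if v ≤ S.top then S.label v else none
  back := by
    intro v j w h
    try dsimp only at h
    split_ifs at h with h1 h2
    · subst h1
      rcases hps : ps j with ⟨l, hl⟩ | _ | _
      · rw [hps] at h
        have := S.follow_le l S.top w h
        omega
      · rw [hps] at h
        simp only [Option.some_inj] at h
        omega
      · rw [hps] at h
        exact absurd h (by simp)
    · exact S.back v j w h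

/-- A scaffolding automaton with input alphabet `σ`. -/
structure SAutomaton (σ : Type) : Type 1 where
  /-- degree -/
  d : ℕ
  dpos : 1 ≤ d
  /-- working alphabet -/
  Γ : Type
  finΓ : Finite Γ
  /-- distance -/
  k : ℕ
  /-- states -/
  Q : Type
  finQ : Finite Q
  /-- initial state -/
  q0 : Q
  /-- accepting states -/
  F : Set Q
  /-- transition function -/
  δ : Q → σ → Nbhd d Γ k → Q × Γ × (Fin d → PathSpec d k)

/-- A single step of computation of a scaffolding automaton on input symbol `a`. -/
def SAutomaton.step {σ : Type} (A : SAutomaton σ) (a : σ) :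
    A.Q × Scaffold A.d A.Γ → A.Q × Scaffold A.d A.Γ :=
  fun c =>
    let out := A.δ c.1 a (c.2.nbhd A.k c.2.top)
    (out.1, c.2.extend out.2.1 out.2.2)

/-- The state and scaffold reached by a scaffolding automaton after reading `x`. -/
def SAutomaton.run {σ : Type} (A : SAutomaton σ) (x : List σ) :
    A.Q × Scaffold A.d A.Γ :=
  x.foldl (fun c a => A.step a c) (A.q0, Scaffold.init A.d A.Γ)

/-- The language decided by a scaffolding automaton. -/
def SAutomaton.Lang {σ : Type} (A : SAutomaton σ) : Set (List σ) :=
  { x | (A.run x).1 ∈ A.F }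

/-! After reading a prefix `p` of the input, the automaton holds a scaffold for `u = pʳ`, the
input of the parser seen so far: node `v ≥ 1` stands for the suffix of `u` of length `v`, and for
each expression `e` occurring in the rules it has an edge to the node of the suffix that remains
after `e` succeeds there, missing if `e` fails. Reading `a` appends the node for `a :: u`, whose
edges come from evaluating every expression on `a :: u`: a call on a strictly shorter suffix is
answered by following edges from the old top node, so only calls at the same position recurse.
As `G` is total, each such call strictly lowers the least budget a budgeted evaluator needs, so
these calls nest at most as deep as there are expressions, and a neighbourhood of that depth
determines the new node. -/

/-! ## The PEG semantics: prefixes, determinism and same-position calls -/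

section Semantics

variable {σ ν : Type} {R : ν → PExp σ ν}

namespace PegRec

theorem isPrefix {e : PExp σ ν} {x : List σ} {r : Option (List σ)} (h : PegRec R e x r) :
    ∀ y ∈ r, y <+: x := by
  induction h <;> simp_all [List.prefix_append_right_inj]

end PegRec

/-- `PegCall R x c e`: evaluating `e` on `x` evaluates `c` on the same input `x`. -/
inductive PegCall (R : ν → PExp σ ν) (x : List σ) : PExp σ ν → PExp σ ν → Prop where
  | nt (A : ν) : PegCall R x (R A) (.nt A)
  | notP (e : PExp σ ν) : PegCall R x e (.notP e)
  | andP (e : PExp σ ν) : PegCall R x e (.andP e)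
  | seqLeft (e₁ e₂ : PExp σ ν) : PegCall R x e₁ (.seq e₁ e₂)
  | seqRight {e₁ : PExp σ ν} (e₂ : PExp σ ν) :
      PegRec R e₁ x (some []) → PegCall R x e₂ (.seq e₁ e₂)
  | choiceLeft (e₁ e₂ : PExp σ ν) : PegCall R x e₁ (.choice e₁ e₂)
  | choiceRight {e₁ : PExp σ ν} (e₂ : PExp σ ν) :
      PegRec R e₁ x none → PegCall R x e₂ (.choice e₁ e₂)

section FuelEvaluator

variable [DecidableEq σ]

/-- The recognition map computed with a recursion-depth budget; `none` means the budget ran out. -/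
def pegEval (R : ν → PExp σ ν) : ℕ → PExp σ ν → List σ → Option (Option (List σ))
  | 0, _, _ => none
  | _ + 1, .eps, _ => some (some [])
  | _ + 1, .fail, _ => some none
  | _ + 1, .term _, [] => some none
  | _ + 1, .term a, b :: _ => some (if a = b then some [a] else none)
  | n + 1, .nt A, x => pegEval R n (R A) x
  | n + 1, .notP e, x => (pegEval R n e x).map fun r => if r.isSome then none else some []
  | n + 1, .andP e, x => (pegEval R n e x).map fun r => r.map fun _ => []
  | n + 1, .seq e₁ e₂, x =>
      (pegEval R n e₁ x).bind fun
        | none => some none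
        | some y₁ => (pegEval R n e₂ (x.drop y₁.length)).map fun r => r.map (y₁ ++ ·)
  | n + 1, .choice e₁ e₂, x =>
      (pegEval R n e₁ x).bind fun
        | some y => some (some y)
        | none => pegEval R n e₂ x

theorem pegEval_mono {n m : ℕ} (hnm : n ≤ m) {e : PExp σ ν} {x : List σ} {r : Option (List σ)}
    (h : pegEval R n e x = some r) : pegEval R m e x = some r := by
  induction n generalizing m e x r with
  | zero => simp [pegEval] at h
  | succ n ih =>
    obtain ⟨m, rfl⟩ : ∃ m', m = m' + 1 := ⟨m - 1, by omega⟩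
    have ih' : ∀ {e x r}, pegEval R n e x = some r → pegEval R m e x = some r := ih (by omega)
    cases e with
    | eps | fail => exact h
    | term a => cases x <;> exact h
    | nt A => exact ih' h
    | notP e | andP e =>
      simp only [pegEval, Option.map_eq_some_iff] at h ⊢
      obtain ⟨a, ha, rfl⟩ := h
      exact ⟨a, ih' ha, rfl⟩
    | seq e₁ e₂ =>
      simp only [pegEval, Option.bind_eq_some_iff] at h ⊢
      obtain ⟨_ | y, ha, h⟩ := h
      · exact ⟨none, ih' ha, h⟩
      refine ⟨some y, ih' ha, ?_⟩
      simp only [Option.map_eq_some_iff] at h ⊢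
      obtain ⟨b, hb, rfl⟩ := h
      exact ⟨b, ih' hb, rfl⟩
    | choice e₁ e₂ =>
      simp only [pegEval, Option.bind_eq_some_iff] at h ⊢
      obtain ⟨_ | y, ha, h⟩ := h
      · exact ⟨none, ih' ha, ih' h⟩
      · exact ⟨some y, ih' ha, h⟩

theorem pegEval_functional {n m : ℕ} {e : PExp σ ν} {x : List σ} {r r' : Option (List σ)}
    (h : pegEval R n e x = some r) (h' : pegEval R m e x = some r') : r = r' :=
  Option.some_injective _ <|
    (pegEval_mono (le_max_left n m) h).symm.trans (pegEval_mono (le_max_right n m) h')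

theorem PegRec.exists_pegEval {e : PExp σ ν} {x : List σ} {r : Option (List σ)}
    (h : PegRec R e x r) : ∃ n, pegEval R n e x = some r := by
  induction h with
  | eps | fail | termNil => exact ⟨1, rfl⟩
  | termOk => exact ⟨1, by simp [pegEval]⟩
  | termMismatch _ _ _ hab => exact ⟨1, by simp [pegEval, hab]⟩
  | notFail _ _ _ ih | notSucc _ _ _ _ ih | andSucc _ _ _ _ ih | andFail _ _ _ ih
  | seqFail₁ _ _ _ _ ih | choice₁ _ _ _ _ _ ih | ntRule _ _ _ _ ih =>
    obtain ⟨n, hn⟩ := ih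
    exact ⟨n + 1, by simp [pegEval, hn]⟩
  | seqOk _ _ _ _ _ _ _ ih₁ ih₂ | seqFail₂ _ _ _ _ _ _ ih₁ ih₂ | choice₂ _ _ _ _ _ _ ih₁ ih₂ =>
    obtain ⟨n₁, hn₁⟩ := ih₁
    obtain ⟨n₂, hn₂⟩ := ih₂
    refine ⟨max n₁ n₂ + 1, ?_⟩
    simp [pegEval, pegEval_mono (le_max_left n₁ n₂) hn₁, pegEval_mono (le_max_right n₁ n₂) hn₂]

theorem PegCall.pegEval_isSome {x : List σ} {c e : PExp σ ν} (hc : PegCall R x c e) {n : ℕ}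
    {r : Option (List σ)} (h : pegEval R (n + 1) e x = some r) : (pegEval R n c x).isSome := by
  cases hc with
  | nt A => simp [show pegEval R n (R A) x = some r from h]
  | notP e | andP e =>
    simp only [pegEval, Option.map_eq_some_iff] at h
    obtain ⟨a, ha, -⟩ := h
    simp [ha]
  | seqLeft e₁ e₂ | choiceLeft e₁ e₂ =>
    simp only [pegEval, Option.bind_eq_some_iff] at h
    obtain ⟨a, ha, -⟩ := h
    simp [ha]
  | seqRight e₂ h₁ =>
    simp only [pegEval, Option.bind_eq_some_iff] at h
    obtain ⟨a, ha, h⟩ := h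
    obtain ⟨m, hm⟩ := h₁.exists_pegEval
    cases pegEval_functional ha hm
    simp only [List.length_nil, List.drop_zero, Option.map_eq_some_iff] at h
    obtain ⟨b, hb, -⟩ := h
    simp [hb]
  | choiceRight e₂ h₁ =>
    simp only [pegEval, Option.bind_eq_some_iff] at h
    obtain ⟨a, ha, h⟩ := h
    obtain ⟨m, hm⟩ := h₁.exists_pegEval
    cases pegEval_functional ha hm
    simp [h]

end FuelEvaluator

theorem PegRec.unique {e : PExp σ ν} {x : List σ} {r r' : Option (List σ)}
    (h : PegRec R e x r) (h' : PegRec R e x r') : r = r' := by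
  classical
  obtain ⟨n, hn⟩ := h.exists_pegEval
  obtain ⟨m, hm⟩ := h'.exists_pegEval
  exact pegEval_functional hn hm

end Semantics

namespace PEG.Total

variable {σ : Type} {G : PEG σ} (hG : G.Total)

noncomputable def recog (e : PExp σ G.ν) (x : List σ) : Option (List σ) :=
  (hG e x).choose

theorem pegRec_recog (e : PExp σ G.ν) (x : List σ) : PegRec G.R e x (hG.recog e x) :=
  (hG e x).choose_spec

theorem recog_eq {e : PExp σ G.ν} {x : List σ} {r : Option (List σ)} (h : PegRec G.R e x r) :
    hG.recog e x = r :=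
  (hG.pegRec_recog e x).unique h

theorem recog_isPrefix {e : PExp σ G.ν} {x y : List σ} (h : hG.recog e x = some y) : y <+: x :=
  (hG.pegRec_recog e x).isPrefix y h

theorem recog_eps (x : List σ) : hG.recog .eps x = some [] := hG.recog_eq (.eps x)

theorem recog_fail (x : List σ) : hG.recog .fail x = none := hG.recog_eq (.fail x)

theorem recog_term_self (a : σ) (z : List σ) : hG.recog (.term a) (a :: z) = some [a] :=
  hG.recog_eq (.termOk a z)

theorem recog_term_of_ne {a b : σ} (hab : a ≠ b) (z : List σ) :
    hG.recog (.term a) (b :: z) = none :=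
  hG.recog_eq (.termMismatch a b z hab)

theorem recog_nt (A : G.ν) (x : List σ) : hG.recog (.nt A) x = hG.recog (G.R A) x :=
  hG.recog_eq (.ntRule A x _ (hG.pegRec_recog _ x))

theorem recog_notP (e : PExp σ G.ν) (x : List σ) :
    hG.recog (.notP e) x = if (hG.recog e x).isSome then none else some [] := by
  have h := hG.pegRec_recog e x
  rcases hr : hG.recog e x with _ | y <;> rw [hr] at h
  · exact hG.recog_eq (.notFail e x h)
  · exact hG.recog_eq (.notSucc e x y h)

theorem recog_andP (e : PExp σ G.ν) (x : List σ) :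
    hG.recog (.andP e) x = (hG.recog e x).map fun _ => [] := by
  have h := hG.pegRec_recog e x
  rcases hr : hG.recog e x with _ | y <;> rw [hr] at h
  · exact hG.recog_eq (.andFail e x h)
  · exact hG.recog_eq (.andSucc e x y h)

theorem recog_choice (e₁ e₂ : PExp σ G.ν) (x : List σ) :
    hG.recog (.choice e₁ e₂) x = (hG.recog e₁ x).or (hG.recog e₂ x) := by
  have h := hG.pegRec_recog e₁ x
  rcases hr : hG.recog e₁ x with _ | y <;> rw [hr] at h
  · exact hG.recog_eq (.choice₂ e₁ e₂ x _ h (hG.pegRec_recog e₂ x))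
  · exact hG.recog_eq (.choice₁ e₁ e₂ x y h)

theorem recog_seq (e₁ e₂ : PExp σ G.ν) (x : List σ) :
    hG.recog (.seq e₁ e₂) x =
      (hG.recog e₁ x).bind fun y => (hG.recog e₂ (x.drop y.length)).map (y ++ ·) := by
  have h := hG.pegRec_recog e₁ x
  rcases hr : hG.recog e₁ x with _ | y
  · rw [hr] at h
    exact hG.recog_eq (.seqFail₁ e₁ e₂ x h)
  obtain ⟨z, rfl⟩ := hG.recog_isPrefix hr
  rw [hr] at h
  have h₂ := hG.pegRec_recog e₂ z
  rw [Option.bind_some, List.drop_left]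
  rcases hr₂ : hG.recog e₂ z with _ | y₂ <;> rw [hr₂] at h₂
  · exact hG.recog_eq (.seqFail₂ e₁ e₂ y z h h₂)
  · exact hG.recog_eq (.seqOk e₁ e₂ y z y₂ h h₂)

section Fuel

variable [DecidableEq σ]

noncomputable def fuel (e : PExp σ G.ν) (x : List σ) : ℕ :=
  Nat.find (p := fun n => (pegEval G.R n e x).isSome) <|
    let ⟨n, hn⟩ := (hG.pegRec_recog e x).exists_pegEval
    ⟨n, by simp [hn]⟩

theorem fuel_lt_of_call {x : List σ} {c e : PExp σ G.ν} (hc : PegCall G.R x c e) :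
    hG.fuel c x < hG.fuel e x := by
  have he : (pegEval G.R (hG.fuel e x) e x).isSome :=
    Nat.find_spec (p := fun n => (pegEval G.R n e x).isSome) _
  cases hn : hG.fuel e x with
  | zero => simp [hn, pegEval] at he
  | succ n =>
    rw [hn] at he
    obtain ⟨r, hr⟩ := Option.isSome_iff_exists.mp he
    exact Nat.lt_succ_of_le (Nat.find_min' _ (hc.pegEval_isSome hr))

end Fuel

end PEG.Total

/-! ## Neighbourhoods and extensions of scaffolds -/

/-- The label of the node reached from the root of a neighbourhood along a path of edge indices:
`none` if the path leaves the neighbourhood or uses a missing edge, `some none` at an unlabelled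
node. -/
def Nbhd.labelAt {d : ℕ} {Γ : Type} : (k : ℕ) → Nbhd d Γ k → List (Fin d) → Option (Option Γ)
  | 0, nb, [] => some nb
  | 0, _, _ :: _ => none
  | _ + 1, nb, [] => some nb.1
  | k + 1, nb, i :: l => (nb.2 i).bind fun t => labelAt k t l

attribute [ext] Scaffold

namespace Scaffold

variable {d : ℕ} {Γ : Type} (S : Scaffold d Γ)

theorem follow_append_singleton (l : List (Fin d)) (i : Fin d) (v : ℕ) :
    S.follow (l ++ [i]) v = (S.follow l v).bind (S.edge · i) := by
  induction l generalizing v with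
  | nil => simp [follow]
  | cons j l ih => cases h : S.edge v j <;> simp [follow, h, ih]

theorem labelAt_nbhd {k : ℕ} {l : List (Fin d)} (hl : l.length ≤ k) (v : ℕ) :
    (S.nbhd k v).labelAt k l = (S.follow l v).map S.label := by
  induction l generalizing k v with
  | nil => cases k <;> rfl
  | cons i l ih =>
    obtain ⟨k, rfl⟩ : ∃ k', k = k' + 1 := ⟨k - 1, by simp at hl; omega⟩
    cases h : S.edge v i <;> simp [nbhd, Nbhd.labelAt, follow, h, ih (k := k) (by simpa using hl)]

end Scaffold

def PathSpec.target {d k : ℕ} {Γ : Type} (S : Scaffold d Γ) : PathSpec d k → Option ℕ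
  | .path l _ => S.follow l S.top
  | .self => some (S.top + 1)
  | .missing => none

theorem Scaffold.extend_edge {d k : ℕ} {Γ : Type} (S : Scaffold d Γ) (γ : Γ)
    (ps : Fin d → PathSpec d k) (v : ℕ) (j : Fin d) :
    (S.extend γ ps).edge v j =
      if v = S.top + 1 then (ps j).target S else if v ≤ S.top then S.edge v j else none := by
  simp only [Scaffold.extend]
  split_ifs
  · cases ps j <;> rfl
  all_goals rfl

theorem List.rtake_cons_of_le {α : Type*} (a : α) {u : List α} {v : ℕ} (h : v ≤ u.length) :
    (a :: u).rtake v = u.rtake v := by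
  simp only [List.rtake, List.length_cons, Nat.succ_sub h, List.drop_succ_cons]

/-! ## The scaffolding automaton of a total PEG -/

namespace PegScaffold

variable {σ ν : Type}

def subexprs : PExp σ ν → List (PExp σ ν)
  | .notP e => .notP e :: subexprs e
  | .andP e => .andP e :: subexprs e
  | .seq e₁ e₂ => .seq e₁ e₂ :: (subexprs e₁ ++ subexprs e₂)
  | .choice e₁ e₂ => .choice e₁ e₂ :: (subexprs e₁ ++ subexprs e₂)
  | e => [e]

theorem mem_subexprs_self (e : PExp σ ν) : e ∈ subexprs e := by
  cases e <;> simp [subexprs]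

theorem subexprs_subset_of_mem {e f : PExp σ ν} (h : e ∈ subexprs f) :
    subexprs e ⊆ subexprs f := by
  induction f <;> simp only [subexprs, List.mem_cons, List.mem_append] at h <;>
    aesop (add norm simp [subexprs, List.subset_def])

variable (G : PEG σ)

noncomputable def exprs : List (PExp σ G.ν) :=
  haveI := G.finNT
  letI := Fintype.ofFinite G.ν
  Finset.univ.toList.flatMap fun A => subexprs (G.R A)

theorem subexprs_rule_subset_exprs (A : G.ν) : subexprs (G.R A) ⊆ exprs G := by
  intro e he
  simpa [exprs] using ⟨A, he⟩

theorem subexprs_subset_exprs {e : PExp σ G.ν} (he : e ∈ exprs G) : subexprs e ⊆ exprs G := by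
  obtain ⟨A, -, hA⟩ := List.mem_flatMap.mp he
  exact List.Subset.trans (subexprs_subset_of_mem hA) (subexprs_rule_subset_exprs G A)

theorem rule_mem_exprs (A : G.ν) : G.R A ∈ exprs G :=
  subexprs_rule_subset_exprs G A (mem_subexprs_self _)

theorem mem_exprs_of_call {x : List σ} {c e : PExp σ G.ν} (hc : PegCall G.R x c e)
    (he : e ∈ exprs G) : c ∈ exprs G := by
  cases hc with
  | nt A => exact rule_mem_exprs G A
  | _ => exact subexprs_subset_exprs G he (by simp [subexprs, mem_subexprs_self])

open Classical in
noncomputable def exprIdx (e : PExp σ G.ν) : Fin (exprs G).length :=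
  if h : e ∈ exprs G then ⟨(exprs G).idxOf e, List.idxOf_lt_length_of_mem h⟩
  else ⟨0, List.length_pos_of_mem (rule_mem_exprs G G.S)⟩

theorem get_exprIdx {e : PExp σ G.ν} (he : e ∈ exprs G) : (exprs G).get (exprIdx G e) = e := by
  classical
  simp [exprIdx, he]

abbrev Path : Type := List (Fin (exprs G).length)

variable {G} (hG : G.Total)

/-- The scaffold after reading `uʳ`: node `v` stands for the suffix `u.rtake v`, and node `0`, the
empty suffix, is the only unlabelled one. -/
noncomputable def canonical (u : List σ) : Scaffold (exprs G).length Unit where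
  top := u.length
  edge v i :=
    if 1 ≤ v ∧ v ≤ u.length then
      (hG.recog ((exprs G).get i) (u.rtake v)).map fun y => v - y.length
    else none
  label v := if 1 ≤ v ∧ v ≤ u.length then some () else none
  back v i w h := by
    split_ifs at h
    obtain ⟨y, -, rfl⟩ := Option.map_eq_some_iff.mp h
    omega

@[simp]
theorem canonical_top (u : List σ) : (canonical hG u).top = u.length := rfl

theorem canonical_nil : canonical hG [] = Scaffold.init (exprs G).length Unit := by
  ext v <;> simp only [canonical, Scaffold.init, List.length_nil] <;> split_ifs <;>
    first | omega | rfl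

theorem canonical_edge {u : List σ} {v : ℕ} (h₁ : 1 ≤ v) (h₂ : v ≤ u.length)
    (i : Fin (exprs G).length) :
    (canonical hG u).edge v i =
      (hG.recog ((exprs G).get i) (u.rtake v)).map fun y => v - y.length := by
  simp [canonical, h₁, h₂]

theorem canonical_label {u : List σ} {v : ℕ} (h : v ≤ u.length) :
    (canonical hG u).label v = if v = 0 then none else some () := by
  by_cases hv : v = 0 <;> simp [canonical, hv, h]

def ReadsLabels (u : List σ) (K : ℕ) (look : Path G → Option (Option Unit)) : Prop :=
  ∀ l : Path G, l.length ≤ K →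
    look l = ((canonical hG u).follow l u.length).map (canonical hG u).label

theorem extend_eq_canonical_cons {k : ℕ} (a : σ) (u : List σ)
    (ps : Fin (exprs G).length → PathSpec (exprs G).length k)
    (hps : ∀ i, (ps i).target (canonical hG u) =
      (hG.recog ((exprs G).get i) (a :: u)).map fun y => u.length + 1 - y.length) :
    (canonical hG u).extend () ps = canonical hG (a :: u) := by
  refine Scaffold.ext rfl (funext₂ fun v i => ?_) (funext fun v => ?_)
  · rw [Scaffold.extend_edge, canonical_top]
    split_ifs with h₁ h₂
    · subst h₁
      rw [hps, canonical_edge hG (by omega) (by simp)]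
      simp [List.rtake]
    · by_cases hv : v = 0
      · simp [canonical, hv]
      · rw [canonical_edge hG (by omega) h₂, canonical_edge hG (by omega) (by simp; omega),
          List.rtake_cons_of_le a h₂]
    · simp [canonical]
      omega
  · simp only [Scaffold.extend, canonical, List.length_cons]
    by_cases h₁ : v = u.length + 1 <;> by_cases h₂ : 1 ≤ v <;> by_cases h₃ : v ≤ u.length <;>
      simp [h₁, h₂, h₃] <;> omega

/-- The outcome of an expression on the input that starts at the new top node: failure, success
consuming nothing, or success ending at the node reached from the old top node along a path. -/
inductive LocalResult (d : ℕ) : Type where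
  | fail : LocalResult d
  | here : LocalResult d
  | jump (l : List (Fin d)) : LocalResult d

/-- `res` describes the recognition result `r` on the input of the node `S.top + 1`. -/
def LocalResult.Realizes {d : ℕ} {Γ : Type} (S : Scaffold d Γ) :
    LocalResult d → Option (List σ) → Prop
  | .fail, r => r = none
  | .here, r => r = some []
  | .jump l, r => ∃ y, r = some y ∧ S.follow l S.top = some (S.top + 1 - y.length)

def LocalResult.toPathSpec {d : ℕ} (k : ℕ) : LocalResult d → PathSpec d k
  | .fail => .missing
  | .here => .self
  | .jump l => if h : l.length ≤ k then .path l h else .missing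

/-- Success ending at the unlabelled node `0`, i.e. consuming the whole input. -/
def LocalResult.consumesAll {d : ℕ} {Γ : Type} (look : List (Fin d) → Option (Option Γ)) :
    LocalResult d → Bool
  | .jump l => (look l).any Option.isNone
  | _ => false

theorem LocalResult.Realizes.target_toPathSpec {d k : ℕ} {Γ : Type} {S : Scaffold d Γ}
    {res : LocalResult d} {r : Option (List σ)} (hres : res.Realizes S r)
    (hk : ∀ l, res = .jump l → l.length ≤ k) :
    (res.toPathSpec k).target S = r.map fun y => S.top + 1 - y.length := by
  rcases res with _ | _ | l
  · simp [toPathSpec, PathSpec.target, show r = none from hres]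
  · simp [toPathSpec, PathSpec.target, show r = some [] from hres]
  · obtain ⟨y, rfl, hfollow⟩ := hres
    simp [toPathSpec, PathSpec.target, hk l rfl, hfollow]

/-- Sequencing after the first expression jumped along `l`: node `0` answers through the table of
results on the empty input, any other node through the presence of its edge for `e₂`. -/
noncomputable def seqJump (look : Path G → Option (Option Unit)) (l : Path G) (e₂ : PExp σ G.ν) :
    Option (LocalResult (exprs G).length) :=
  match look l with
  | some none => some (if (hG.recog e₂ []).isSome then .jump l else .fail)
  | some (some _) =>
    some (if (look (l ++ [exprIdx G e₂])).isSome then .jump (l ++ [exprIdx G e₂]) else .fail)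
  | none => none

theorem seqJump_realizes {a : σ} {u : List σ} {K : ℕ} {look : Path G → Option (Option Unit)}
    (hlook : ReadsLabels hG u K look) {l : Path G} (hl : l.length < K) {e₁ e₂ : PExp σ G.ν}
    (he₂ : e₂ ∈ exprs G)
    (h₁ : (LocalResult.jump l).Realizes (canonical hG u) (hG.recog e₁ (a :: u))) :
    ∃ res, seqJump hG look l e₂ = some res ∧
      res.Realizes (canonical hG u) (hG.recog (.seq e₁ e₂) (a :: u)) := by
  obtain ⟨y, hy, hfollow⟩ := h₁
  rw [canonical_top] at hfollow
  set w := u.length + 1 - y.length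
  have hwu : w ≤ u.length := (canonical hG u).follow_le l _ _ hfollow
  have hy_len : y.length ≤ u.length + 1 := by simpa using (hG.recog_isPrefix hy).length_le
  have hrest : (a :: u).drop y.length = u.rtake w := by
    obtain ⟨m, hm⟩ : ∃ m, y.length = m + 1 := ⟨y.length - 1, by omega⟩
    rw [hm, List.drop_succ_cons, List.rtake]
    congr 1
    omega
  have hlook_l : look l = some ((canonical hG u).label w) := by rw [hlook l hl.le, hfollow]; rfl
  rw [hG.recog_seq, hy, Option.bind_some, hrest]
  rcases Nat.eq_zero_or_pos w with hw0 | hwpos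
  · rw [canonical_label hG hwu, if_pos hw0] at hlook_l
    simp only [seqJump, hlook_l, hw0, List.rtake_zero]
    rcases hr : hG.recog e₂ [] with _ | y₂
    · exact ⟨.fail, rfl, rfl⟩
    · obtain rfl : y₂ = [] := List.prefix_nil.mp (hG.recog_isPrefix hr)
      exact ⟨.jump l, rfl, y, by simp, hfollow⟩
  · rw [canonical_label hG hwu, if_neg hwpos.ne'] at hlook_l
    have hedge : (canonical hG u).follow (l ++ [exprIdx G e₂]) u.length =
        (hG.recog e₂ (u.rtake w)).map fun y₂ => w - y₂.length := by
      rw [Scaffold.follow_append_singleton, hfollow, Option.bind_some,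
        canonical_edge hG hwpos hwu, get_exprIdx G he₂]
    have hlook₂ := hlook (l ++ [exprIdx G e₂]) (by simp; omega)
    rw [hedge] at hlook₂
    rcases hr : hG.recog e₂ (u.rtake w) with _ | y₂ <;> rw [hr] at hedge hlook₂
    · exact ⟨.fail, by simp [seqJump, hlook_l, hlook₂], rfl⟩
    · refine ⟨.jump (l ++ [exprIdx G e₂]), by simp [seqJump, hlook_l, hlook₂], y ++ y₂, rfl, ?_⟩
      rw [canonical_top, hedge, Option.map_some, List.length_append]
      congr 1
      omega

variable [DecidableEq σ]

/-- Evaluates an expression on `a :: u` from the labels `look` seen along paths from the top node of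
the scaffold for `u`, within a recursion budget. -/
noncomputable def localEval (a : σ) (look : Path G → Option (Option Unit)) :
    ℕ → PExp σ G.ν → Option (LocalResult (exprs G).length)
  | 0, _ => none
  | _ + 1, .eps => some .here
  | _ + 1, .fail => some .fail
  | _ + 1, .term b => some (if b = a then .jump [] else .fail)
  | n + 1, .nt A => localEval a look n (G.R A)
  | n + 1, .notP e => (localEval a look n e).map fun | .fail => .here | _ => .fail
  | n + 1, .andP e => (localEval a look n e).map fun | .fail => .fail | _ => .here
  | n + 1, .choice e₁ e₂ => (localEval a look n e₁).bind fun
      | .fail => localEval a look n e₂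
      | res => some res
  | n + 1, .seq e₁ e₂ => (localEval a look n e₁).bind fun
      | .fail => some .fail
      | .here => localEval a look n e₂
      | .jump l => seqJump hG look l e₂

theorem length_lt_of_localEval_eq_jump {a : σ}
    {look : Path G → Option (Option Unit)} {n : ℕ} {e : PExp σ G.ν} {l : Path G}
    (h : localEval hG a look n e = some (.jump l)) : l.length < n := by
  induction n generalizing e l with
  | zero => simp [localEval] at h
  | succ n ih =>
    have ih' : ∀ {e l}, localEval hG a look n e = some (.jump l) → l.length < n + 1 :=
      fun h => (ih h).trans (lt_add_one n)
    cases e with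
    | eps | fail => cases h
    | term b =>
      simp only [localEval] at h
      split_ifs at h <;> cases h
      simp
    | nt A => exact ih' h
    | notP e | andP e =>
      obtain ⟨r, -, hr⟩ := Option.map_eq_some_iff.mp h
      cases r <;> cases hr
    | choice e₁ e₂ =>
      obtain ⟨r, hr, h⟩ := Option.bind_eq_some_iff.mp h
      cases r with
      | fail => exact ih' h
      | here => cases h
      | jump l' => cases h; exact ih' hr
    | seq e₁ e₂ =>
      obtain ⟨r, hr, h⟩ := Option.bind_eq_some_iff.mp h
      cases r with
      | fail => cases h
      | here => exact ih' h
      | jump l' =>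
        have := ih hr
        simp only [seqJump] at h
        split at h <;> (try split_ifs at h) <;> cases h <;> simp <;> omega

noncomputable def rank (s : List σ) (e : PExp σ G.ν) : ℕ :=
  ((exprs G).filter fun c => hG.fuel c s ≤ hG.fuel e s).length

theorem rank_le_length (s : List σ) (e : PExp σ G.ν) : rank hG s e ≤ (exprs G).length :=
  List.length_filter_le _ _

theorem rank_lt_of_call {s : List σ} {c e : PExp σ G.ν} (he : e ∈ exprs G)
    (hc : PegCall G.R s c e) : rank hG s c < rank hG s e := by
  have hlt := hG.fuel_lt_of_call hc
  have hsub := List.monotone_filter_right (exprs G)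
    (p := fun c' => hG.fuel c' s ≤ hG.fuel c s) (q := fun c' => hG.fuel c' s ≤ hG.fuel e s)
    (by simp only [decide_eq_true_eq]; omega)
  refine lt_of_le_of_ne hsub.length_le fun hlen => ?_
  have he' : e ∈ (exprs G).filter fun c' => hG.fuel c' s ≤ hG.fuel c s := by
    rw [hsub.eq_of_length hlen]
    simp [he]
  simp only [List.mem_filter, decide_eq_true_eq] at he'
  omega

section LocalEvalCorrect

variable (a : σ) (u : List σ) (look : Path G → Option (Option Unit))

def LocalEvalCorrect (n : ℕ) (e : PExp σ G.ν) : Prop :=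
  ∃ res, localEval hG a look n e = some res ∧ res.Realizes (canonical hG u) (hG.recog e (a :: u))

variable {hG a u look} {n : ℕ}

theorem LocalEvalCorrect.notP {e : PExp σ G.ν} (h : LocalEvalCorrect hG a u look n e) :
    LocalEvalCorrect hG a u look (n + 1) (.notP e) := by
  obtain ⟨res, h, hres⟩ := h
  refine ⟨_, by simp only [localEval, h, Option.map_some]; rfl, ?_⟩
  rw [hG.recog_notP]
  rcases res with _ | _ | l <;> simp only [LocalResult.Realizes] at hres ⊢
  · simp [hres]
  · simp [hres]
  · obtain ⟨y, hy, -⟩ := hres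
    simp [hy]

theorem LocalEvalCorrect.andP {e : PExp σ G.ν} (h : LocalEvalCorrect hG a u look n e) :
    LocalEvalCorrect hG a u look (n + 1) (.andP e) := by
  obtain ⟨res, h, hres⟩ := h
  refine ⟨_, by simp only [localEval, h, Option.map_some]; rfl, ?_⟩
  rw [hG.recog_andP]
  rcases res with _ | _ | l <;> simp only [LocalResult.Realizes] at hres ⊢
  · simp [hres]
  · simp [hres]
  · obtain ⟨y, hy, -⟩ := hres
    simp [hy]

theorem LocalEvalCorrect.choice {e₁ e₂ : PExp σ G.ν} (h₁ : LocalEvalCorrect hG a u look n e₁)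
    (h₂ : hG.recog e₁ (a :: u) = none → LocalEvalCorrect hG a u look n e₂) :
    LocalEvalCorrect hG a u look (n + 1) (.choice e₁ e₂) := by
  obtain ⟨res₁, h₁, hres₁⟩ := h₁
  rw [LocalEvalCorrect, hG.recog_choice]
  rcases res₁ with _ | _ | l
  · obtain ⟨res₂, h₂, hres₂⟩ := h₂ hres₁
    refine ⟨res₂, by simp [localEval, h₁, h₂], ?_⟩
    rwa [show hG.recog e₁ (a :: u) = none from hres₁, Option.none_or]
  · refine ⟨.here, by simp [localEval, h₁], ?_⟩
    rw [show hG.recog e₁ (a :: u) = some [] from hres₁, Option.some_or]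
    rfl
  · obtain ⟨y, hy, hfollow⟩ := hres₁
    exact ⟨.jump l, by simp [localEval, h₁], y, by rw [hy, Option.some_or], hfollow⟩

theorem LocalEvalCorrect.seq (hlook : ReadsLabels hG u (n + 1) look)
    {e₁ e₂ : PExp σ G.ν} (he₂ : e₂ ∈ exprs G) (h₁ : LocalEvalCorrect hG a u look n e₁)
    (h₂ : hG.recog e₁ (a :: u) = some [] → LocalEvalCorrect hG a u look n e₂) :
    LocalEvalCorrect hG a u look (n + 1) (.seq e₁ e₂) := by
  obtain ⟨res₁, h₁, hres₁⟩ := h₁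
  rcases res₁ with _ | _ | l
  · refine ⟨.fail, by simp [localEval, h₁], ?_⟩
    rw [hG.recog_seq, show hG.recog e₁ (a :: u) = none from hres₁]
    rfl
  · obtain ⟨res₂, h₂, hres₂⟩ := h₂ hres₁
    refine ⟨res₂, by simp [localEval, h₁, h₂], ?_⟩
    rw [hG.recog_seq, show hG.recog e₁ (a :: u) = some [] from hres₁]
    simpa using hres₂
  · obtain ⟨res, h, hres⟩ := seqJump_realizes hG hlook
      ((length_lt_of_localEval_eq_jump hG h₁).trans (lt_add_one n)) he₂ hres₁
    exact ⟨res, by simp [localEval, h₁, h], hres⟩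

/-- Every call at the same position lowers the rank, so a budget above the rank suffices. -/
theorem localEval_correct (hlook : ReadsLabels hG u n look)
    {e : PExp σ G.ν} (he : e ∈ exprs G) (hrank : rank hG (a :: u) e < n) :
    LocalEvalCorrect hG a u look n e := by
  induction n generalizing e with
  | zero => omega
  | succ n ih =>
  have ih' : ∀ c, PegCall G.R (a :: u) c e → LocalEvalCorrect hG a u look n c := fun c hc =>
    ih (fun l hl => hlook l (by omega)) (mem_exprs_of_call G hc he)
      (by have := rank_lt_of_call hG he hc; omega)
  cases e with
  | eps => exact ⟨.here, rfl, hG.recog_eps _⟩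
  | fail => exact ⟨.fail, rfl, hG.recog_fail _⟩
  | term b =>
    by_cases hb : b = a
    · subst hb
      exact ⟨.jump [], by simp [localEval], [b], hG.recog_term_self b u, by simp [Scaffold.follow]⟩
    · exact ⟨.fail, by simp [localEval, hb], hG.recog_term_of_ne hb u⟩
  | nt A =>
    obtain ⟨res, h, hres⟩ := ih' _ (.nt A)
    exact ⟨res, h, by rwa [hG.recog_nt]⟩
  | notP e => exact (ih' _ (.notP e)).notP
  | andP e => exact (ih' _ (.andP e)).andP
  | choice e₁ e₂ =>
    exact (ih' _ (.choiceLeft e₁ e₂)).choice fun h =>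
      ih' _ (.choiceRight e₂ (h ▸ hG.pegRec_recog e₁ (a :: u)))
  | seq e₁ e₂ =>
    have he₂ : e₂ ∈ exprs G := subexprs_subset_exprs G he (by simp [subexprs, mem_subexprs_self])
    exact .seq hlook he₂ (ih' _ (.seqLeft e₁ e₂))
      fun h => ih' _ (.seqRight e₂ (h ▸ hG.pegRec_recog e₁ (a :: u)))

end LocalEvalCorrect

theorem LocalResult.Realizes.consumesAll_eq {a : σ} {u : List σ}
    {look : Path G → Option (Option Unit)} {K : ℕ} (hlook : ReadsLabels hG u K look)
    {res : LocalResult (exprs G).length} (hK : ∀ l, res = .jump l → l.length ≤ K) {e : PExp σ G.ν}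
    (hres : res.Realizes (canonical hG u) (hG.recog e (a :: u))) :
    res.consumesAll look = decide (hG.recog e (a :: u) = some (a :: u)) := by
  rcases res with _ | _ | l
  · simp [consumesAll, show hG.recog e (a :: u) = none from hres]
  · simp [consumesAll, show hG.recog e (a :: u) = some [] from hres]
  · obtain ⟨y, hy, hfollow⟩ := hres
    rw [canonical_top] at hfollow
    have hwu := (canonical hG u).follow_le l _ _ hfollow
    have hprefix := hG.recog_isPrefix hy
    have hy_len : y.length ≤ u.length + 1 := by simpa using hprefix.length_le
    rw [consumesAll, hlook l (hK l rfl), hfollow, hy, Option.map_some, canonical_label hG hwu]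
    by_cases hw : u.length + 1 - y.length = 0
    · have : y = a :: u := hprefix.eq_of_length (by simp; omega)
      simp [this]
    · have : y ≠ a :: u := by rintro rfl; simp at hw
      simp [hw, this]

/-- The state records whether the reversal of the input read so far lies in `L(G)`. -/
noncomputable def automaton : SAutomaton σ where
  d := (exprs G).length
  dpos := List.length_pos_of_mem (rule_mem_exprs G G.S)
  Γ := Unit
  finΓ := inferInstance
  k := (exprs G).length + 1
  Q := Bool
  finQ := inferInstance
  q0 := decide (hG.recog (G.R G.S) [] = some [])
  F := {true}
  δ _ a nb :=
    let look := nb.labelAt ((exprs G).length + 1)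
    let result e := (localEval hG a look ((exprs G).length + 1) e).getD .fail
    ((result (G.R G.S)).consumesAll look, (),
      fun i => (result ((exprs G).get i)).toPathSpec ((exprs G).length + 1))

theorem automaton_step (q : Bool) (a : σ) (u : List σ) :
    (automaton hG).step a (q, canonical hG u) =
      (decide (hG.recog (G.R G.S) (a :: u) = some (a :: u)), canonical hG (a :: u)) := by
  set K := (exprs G).length + 1
  set look := ((canonical hG u).nbhd K u.length).labelAt K
  have hlook : ReadsLabels hG u K look := fun l hl => (canonical hG u).labelAt_nbhd hl _
  have hcorrect : ∀ e ∈ exprs G, ∃ res, localEval hG a look K e = some res ∧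
      (∀ l, res = .jump l → l.length ≤ K) ∧
      res.Realizes (canonical hG u) (hG.recog e (a :: u)) := by
    intro e he
    obtain ⟨res, h, hres⟩ :=
      localEval_correct hlook he (Nat.lt_succ_of_le (rank_le_length hG (a :: u) e))
    exact ⟨res, h, by rintro l rfl; exact (length_lt_of_localEval_eq_jump hG h).le, hres⟩
  refine Prod.ext ?_ (extend_eq_canonical_cons hG a u _ fun i => ?_)
  · obtain ⟨res, h, hK, hres⟩ := hcorrect _ (rule_mem_exprs G G.S)
    change ((localEval hG a look K (G.R G.S)).getD .fail).consumesAll look = _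
    rw [h, Option.getD_some, hres.consumesAll_eq hG hlook hK]
  · obtain ⟨res, h, hK, hres⟩ := hcorrect _ (List.get_mem _ _)
    change (((localEval hG a look K _).getD .fail).toPathSpec K).target _ = _
    rw [h, Option.getD_some, hres.target_toPathSpec hK, canonical_top]

theorem automaton_run (x : List σ) :
    (automaton hG).run x =
      (decide (hG.recog (G.R G.S) x.reverse = some x.reverse), canonical hG x.reverse) := by
  induction x using List.reverseRecOn with
  | nil => exact Prod.ext rfl (canonical_nil hG).symm
  | append_singleton x a ih =>
    rw [SAutomaton.run, List.foldl_append, ← SAutomaton.run, ih, List.reverse_append]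
    exact automaton_step hG _ a x.reverse

theorem automaton_lang : (automaton hG).Lang = { x : List σ | x.reverse ∈ G.Lang } := by
  ext x
  change ((automaton hG).run x).1 = true ↔ PegRec G.R (.nt G.S) x.reverse (some x.reverse)
  rw [automaton_run, ← hG.recog_nt]
  exact decide_eq_true_iff.trans ⟨fun h => h ▸ hG.pegRec_recog _ _, hG.recog_eq⟩

end PegScaffold

theorem peg_to_scaffolding_general (σ : Type) (G : PEG σ) (hG : G.Total) :
    ∃ A : SAutomaton σ, A.Lang = { x : List σ | x.reverse ∈ G.Lang } := by
  classical
  exact ⟨PegScaffold.automaton hG, PegScaffold.automaton_lang hG⟩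

/-- For every total PEG `G` over a finite alphabet `Σ` there is a
scaffolding automaton deciding exactly the reversal of the language recognised
by `G`. -/
theorem peg_to_scaffolding (σ : Type) [Fintype σ] (G : PEG σ) (hG : G.Total) :
    ∃ A : SAutomaton σ, A.Lang = { x : List σ | x.reverse ∈ G.Lang } :=
  peg_to_scaffolding_general σ G hG
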